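/- For every positive integer n, Σ_{π ⊢ n} (−1)^{mex(π)−1} mex(π) = Σ_{m≥0} (−1)^m (2m+1) p(n − m(m+1)/2), with p(j)=0 for j<0. -/

import Mathlib

/-!
Since `∑_{k < M} (-1)^k (2k+1) = (-1)^(M-1) M`, the weight of a partition `π` is
`∑_{k < mex π} (-1)^k (2k+1)`, and `k < mex π` means exactly that `1, …, k` are all parts
of `π`. Exchanging the two sums, the coefficient of `(-1)^k (2k+1)` counts the partitions of `n`
containing `1, …, k`; removing these parts identifies them with the partitions of
`n - k(k+1)/2`.
-/

open Finset

/-- The minimal excludant of a partition: the least positive integer not a part. -/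
noncomputable def mex {n : ℕ} (π : Nat.Partition n) : ℕ :=
  sInf {m : ℕ | 0 < m ∧ m ∉ π.parts}

/-- Number of partitions of `n` with minimal excludant `m`. -/
noncomputable def pmex (m n : ℕ) : ℕ :=
  ((Finset.univ : Finset (Nat.Partition n)).filter (fun π => mex π = m)).card

/-- The partition function, extended by `0` on negative integers. -/
noncomputable def pz (k : ℤ) : ℕ := if 0 ≤ k then Fintype.card (Nat.Partition k.toNat) else 0

/-- Number of partitions of `m` into distinct parts. -/
def qdist (m : ℕ) : ℕ := (Nat.Partition.distincts m).card

/-- A two-colored distinct-parts partition of `n`: a set of distinct (part, color)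
pairs with positive parts summing to `n`. -/
def IsTCD (n : ℕ) (s : Finset (ℕ × Fin 2)) : Prop :=
  (∀ p ∈ s, 0 < p.1) ∧ ∑ p ∈ s, p.1 = n

noncomputable def D2 (n : ℕ) : ℕ := Set.ncard {s : Finset (ℕ × Fin 2) | IsTCD n s}
noncomputable def D2e (n : ℕ) : ℕ :=
  Set.ncard {s : Finset (ℕ × Fin 2) | IsTCD n s ∧ Even s.card}
noncomputable def D2o (n : ℕ) : ℕ :=
  Set.ncard {s : Finset (ℕ × Fin 2) | IsTCD n s ∧ Odd s.card}

theorem sum_range_neg_one_pow_mul_two_mul_add_one (M : ℕ) :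
    ∑ k ∈ range M, (-1 : ℤ) ^ k * (2 * k + 1) = (-1) ^ (M - 1) * M := by
  rcases M with _ | M
  · simp
  induction M with
  | zero => simp
  | succ M ih =>
    rw [sum_range_succ, ih]
    push_cast
    simp only [pow_succ]
    ring

theorem sum_Icc_one_id (k : ℕ) : ∑ i ∈ Icc 1 k, i = k * (k + 1) / 2 := by
  have h := sum_range_id (k + 1)
  rw [range_eq_Ico, sum_eq_sum_Ico_succ_bot (by omega), Ico_add_one_right_eq_Icc] at h
  simpa [mul_comm] using h

namespace Nat.Partition

theorem sum_le_of_le_parts {n : ℕ} {p : n.Partition} {s : Multiset ℕ} (h : s ≤ p.parts) :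
    s.sum ≤ n := by
  obtain ⟨t, ht⟩ := Multiset.le_iff_exists_add.1 h
  rw [← p.parts_sum, ht, Multiset.sum_add]
  exact Nat.le_add_right _ _

def partitionWithPartsEquiv {n : ℕ} {s : Multiset ℕ} (hs : ∀ i ∈ s, 0 < i)
    (hsn : s.sum ≤ n) :
    {p : n.Partition // s ≤ p.parts} ≃ (n - s.sum).Partition where
  toFun p := by
    refine ⟨p.1.parts - s,
      fun hi => p.1.parts_pos (Multiset.mem_of_le (Multiset.sub_le_self _ _) hi), ?_⟩
    have := congrArg Multiset.sum (tsub_add_cancel_of_le p.2)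
    rw [Multiset.sum_add, p.1.parts_sum] at this
    omega
  invFun q := ⟨⟨q.parts + s, by grind, by simp [q.parts_sum, hsn]⟩, by simp⟩
  left_inv p := Subtype.ext <| Partition.ext <| tsub_add_cancel_of_le p.2
  right_inv q := Partition.ext <| add_tsub_cancel_right q.parts s

end Nat.Partition

theorem lt_mex_iff {n : ℕ} (π : n.Partition) (k : ℕ) :
    k < mex π ↔ ∀ i ∈ Icc 1 k, i ∈ π.parts := by
  have hne : {m : ℕ | 0 < m ∧ m ∉ π.parts}.Nonempty :=
    ⟨n + 1, n.succ_pos, fun h => by have := π.le_of_mem_parts h; omega⟩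
  obtain ⟨hpos, hnot⟩ : 0 < mex π ∧ mex π ∉ π.parts := Nat.sInf_mem hne
  constructor
  · intro hk i hi
    rw [mem_Icc] at hi
    by_contra h
    exact Nat.notMem_of_lt_sInf (hi.2.trans_lt hk)
      (show i ∈ {m : ℕ | 0 < m ∧ m ∉ π.parts} from ⟨hi.1, h⟩)
  · intro h
    by_contra hk
    exact hnot (h _ (mem_Icc.2 ⟨hpos, not_lt.1 hk⟩))

theorem mex_le_succ {n : ℕ} (π : n.Partition) : mex π ≤ n + 1 := by
  by_contra h
  have := π.le_of_mem_parts ((lt_mex_iff π (n + 1)).1 (not_le.1 h) (n + 1) (by simp))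
  omega

theorem card_filter_le_parts (n : ℕ) {s : Multiset ℕ} (hs : ∀ i ∈ s, 0 < i) :
    #{p : n.Partition | s ≤ p.parts} = pz ((n : ℤ) - s.sum) := by
  by_cases hsn : s.sum ≤ n
  · rw [pz, if_pos (by omega), show ((n : ℤ) - s.sum).toNat = n - s.sum by omega,
      ← Fintype.card_congr (Nat.Partition.partitionWithPartsEquiv hs hsn), Fintype.card_subtype]
  · rw [pz, if_neg (by omega), card_eq_zero, filter_eq_empty_iff]
    exact fun p _ h => hsn (Nat.Partition.sum_le_of_le_parts h)

theorem card_filter_lt_mex (n k : ℕ) :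
    #{π : n.Partition | k < mex π} = pz ((n : ℤ) - (k * (k + 1) / 2 : ℕ)) := by
  rw [← sum_Icc_one_id, sum_eq_multiset_sum, Multiset.map_id',
    ← card_filter_le_parts n (s := (Icc 1 k).val) fun i hi => (mem_Icc.1 (mem_val ▸ hi)).1]
  congr 1
  ext π
  rw [mem_filter, mem_filter, lt_mex_iff, Multiset.le_iff_subset (Icc 1 k).nodup]
  rfl

theorem sigma_bar_mex_formula_general (n : ℕ) :
    ∑ π : Nat.Partition n, (-1 : ℤ) ^ (mex π - 1) * (mex π : ℤ) =
      ∑ m ∈ Finset.range (n + 1),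
        (-1 : ℤ) ^ m * (2 * m + 1) * pz ((n : ℤ) - (m * (m + 1) / 2 : ℕ)) := by
  have weight (π : n.Partition) : (-1 : ℤ) ^ (mex π - 1) * (mex π : ℤ) =
      ∑ m ∈ range (n + 1), if m < mex π then (-1 : ℤ) ^ m * (2 * m + 1) else 0 := by
    rw [← sum_filter, ← sum_range_neg_one_pow_mul_two_mul_add_one]
    congr 1
    ext m
    have := mex_le_succ π
    simp only [mem_filter, mem_range]
    omega
  rw [sum_congr rfl fun π _ => weight π, sum_comm]
  refine sum_congr rfl fun m _ => ?_
  rw [← sum_filter, sum_const, card_filter_lt_mex, nsmul_eq_mul]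
  ring

theorem sigma_bar_mex_formula (n : ℕ) (hn : 0 < n) :
    ∑ π : Nat.Partition n, (-1 : ℤ) ^ (mex π - 1) * (mex π : ℤ) =
      ∑ m ∈ Finset.range (n + 1),
        (-1 : ℤ) ^ m * (2 * m + 1) * pz ((n : ℤ) - (m * (m + 1) / 2 : ℕ)) :=
  sigma_bar_mex_formula_general n
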